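/- Let W be a common subsequence of a finite set of strings A such that for some k with 0 ≤ k ≤ |W|, a character c is common to all the substrings Middle(A_l, W, k). Then W(0,k] ⊕ c ⊕ W(k,|W|] is a common subsequence of A containing W as a subsequence and having length |W| + 1. -/

import Mathlib

/-!
If `W <+ A`, then `W(0,k]` embeds into the shortest prefix of `A` containing it and `W(k,|W|]`
into the shortest suffix containing it. A nonempty `Middle A W k` is exactly the gap between
these two pieces of `A`, so a character `c` of it can be slotted in between the two embeddings.
-/

open List

/-- Length of the shortest prefix of `A` containing `W` as a subsequence. -/
noncomputable def minPrefixLen {α : Type*} (A W : List α) : ℕ :=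
  sInf {n | W <+ A.take n}

/-- Length of the shortest suffix of `A` containing `W` as a subsequence. -/
noncomputable def minSuffixLen {α : Type*} (A W : List α) : ℕ :=
  sInf {n | W <+ A.drop (A.length - n)}

/-- `Middle A W k`: what remains of `A` after deleting the shortest prefix containing
`W.take k` as a subsequence and the shortest suffix containing `W.drop k`. -/
noncomputable def Middle {α : Type*} (A W : List α) (k : ℕ) : List α :=
  (A.take (A.length - minSuffixLen A (W.drop k))).drop (minPrefixLen A (W.take k))

/-- `W` is a common subsequence of all strings in `𝒜`. -/
def IsCommonSubseq {α : Type*} (𝒜 : Finset (List α)) (W : List α) : Prop :=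
  ∀ A ∈ 𝒜, W <+ A

/-- `W` is a maximal common subsequence of `𝒜`: it is a common subsequence and
inserting any single character at any position never yields a common subsequence. -/
def IsMCS {α : Type*} (𝒜 : Finset (List α)) (W : List α) : Prop :=
  IsCommonSubseq 𝒜 W ∧
    ∀ (c : α) (k : ℕ), k ≤ W.length →
      ¬ IsCommonSubseq 𝒜 (W.take k ++ c :: W.drop k)

namespace List

variable {α : Type*}

theorem take_append_drop_take_append_drop (l : List α) {p m : ℕ} (h : p ≤ m) :
    l.take p ++ (l.take m).drop p ++ l.drop m = l := by
  have hp : (l.take m).take p = l.take p := by rw [take_take, min_eq_left h]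
  rw [← hp, take_append_drop, take_append_drop]

theorem sublist_take_append_cons_drop (W : List α) (k : ℕ) (c : α) :
    W <+ W.take k ++ c :: W.drop k := by
  conv_lhs => rw [← take_append_drop k W]
  exact (Sublist.refl _).append (sublist_cons_self _ _)

theorem length_take_append_cons_drop {W : List α} {k : ℕ} (hk : k ≤ W.length) (c : α) :
    (W.take k ++ c :: W.drop k).length = W.length + 1 := by
  simp only [length_append, length_take, length_cons, length_drop]
  omega

end List

section Middle

variable {α : Type*} {A W : List α}

theorem sublist_take_minPrefixLen (h : W <+ A) : W <+ A.take (minPrefixLen A W) :=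
  Nat.sInf_mem (s := {n | W <+ A.take n}) ⟨A.length, by simpa using h⟩

theorem sublist_drop_minSuffixLen (h : W <+ A) :
    W <+ A.drop (A.length - minSuffixLen A W) :=
  Nat.sInf_mem (s := {n | W <+ A.drop (A.length - n)}) ⟨A.length, by simpa using h⟩

theorem take_append_middle_append_drop {k : ℕ} (hM : Middle A W k ≠ []) :
    A.take (minPrefixLen A (W.take k)) ++ Middle A W k ++
      A.drop (A.length - minSuffixLen A (W.drop k)) = A := by
  unfold Middle at hM ⊢
  have hlt := length_pos_iff.mpr hM
  rw [length_drop, length_take] at hlt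
  exact take_append_drop_take_append_drop A (by omega)

theorem take_append_cons_drop_sublist_of_mem_middle {k : ℕ} {c : α} (hW : W <+ A)
    (hc : c ∈ Middle A W k) : W.take k ++ c :: W.drop k <+ A := by
  have hpre := sublist_take_minPrefixLen ((take_sublist k W).trans hW)
  have hsuf := sublist_drop_minSuffixLen ((drop_sublist k W).trans hW)
  rw [← take_append_middle_append_drop (ne_nil_of_mem hc), append_assoc]
  exact hpre.append ((singleton_sublist.mpr hc).append hsuf)

end Middle

theorem stmt6 {α : Type*} (𝒜 : Finset (List α)) (W : List α)
    (hW : IsCommonSubseq 𝒜 W) (k : ℕ) (hk : k ≤ W.length) (c : α)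
    (hc : ∀ A ∈ 𝒜, c ∈ Middle A W k) :
    IsCommonSubseq 𝒜 (W.take k ++ c :: W.drop k) ∧
    W <+ (W.take k ++ c :: W.drop k) ∧
    (W.take k ++ c :: W.drop k).length = W.length + 1 :=
  ⟨fun A hA => take_append_cons_drop_sublist_of_mem_middle (hW A hA) (hc A hA),
    sublist_take_append_cons_drop W k c, length_take_append_cons_drop hk c⟩
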